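/- Let C ⊆ F_q^n be a linear code with parity check matrix H, and define nullity η(σ) = |σ| - rank of the columns of H indexed by σ. Then for 0 ≤ i ≤ dim C and σ ⊆ {1,...,n}: σ is a minimal element of {τ : η(τ) = i} if and only if σ is the support of some i-dimensional subcode of C whose support is minimal among supports of i-dimensional subcodes. -/

import Mathlib

/-!
For `L x = ∑ j, x j • H j`, rank–nullity for `L` on the vectors supported in `τ` shows that `η τ`
is the dimension of the shortened code `C(τ) = {x ∈ C | supp x ⊆ τ}`, and a subcode lies in `C(τ)`
exactly when its support lies in `τ`. A minimal `σ` with `η σ = i` therefore has `C(σ)` as an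
`i`-dimensional subcode with support `σ`, and any `i`-dimensional subcode with support inside `σ`
forces its own support to equal `σ`. Conversely, if `D` has minimal support `σ` then
`dim C(σ) = i`: otherwise cutting `C(σ)` with a hyperplane `x j = 0`, for `j` in its support,
leaves room for an `i`-dimensional subcode of strictly smaller support.
-/

open Module Submodule

theorem Submodule.finrank_map_add_finrank_inf_ker {K V W : Type*} [DivisionRing K]
    [AddCommGroup V] [Module K V] [AddCommGroup W] [Module K W]
    (f : V →ₗ[K] W) (S : Submodule K V) [FiniteDimensional K S] :
    finrank K (S.map f) + finrank K ↥(S ⊓ LinearMap.ker f) = finrank K S := by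
  rw [← LinearMap.range_domRestrict, ← map_comap_subtype, finrank_map_subtype_eq,
    ← LinearMap.ker_domRestrict]
  exact LinearMap.finrank_range_add_finrank_ker _

theorem Submodule.exists_le_finrank_eq {K V : Type*} [DivisionRing K]
    [AddCommGroup V] [Module K V] (W : Submodule K V) [FiniteDimensional K W] {k : ℕ}
    (hk : k ≤ finrank K W) : ∃ D ≤ W, finrank K D = k := by
  obtain ⟨v, hv⟩ := exists_linearIndependent_of_le_finrank hk
  refine ⟨span K (Set.range (W.subtype ∘ v)), span_le.2 ?_, ?_⟩
  · rintro _ ⟨j, rfl⟩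
    exact (v j).2
  · rw [finrank_span_eq_card (hv.map' _ W.ker_subtype), Fintype.card_fin]

namespace LinearCode

variable {F ι : Type*} [Field F]

variable (F) in
def supportedOn (τ : Set ι) : Submodule F (ι → F) :=
  ⨅ j ∈ τᶜ, LinearMap.ker (LinearMap.proj j)

def support (D : Submodule F (ι → F)) : Set ι := {j | ∃ x ∈ D, x j ≠ 0}

def shortening (C : Submodule F (ι → F)) (τ : Set ι) : Submodule F (ι → F) :=
  C ⊓ supportedOn F τ

theorem mem_supportedOn {τ : Set ι} {x : ι → F} : x ∈ supportedOn F τ ↔ ∀ j ∉ τ, x j = 0 := by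
  simp [supportedOn, mem_iInf]

theorem support_subset_iff {D : Submodule F (ι → F)} {τ : Set ι} :
    support D ⊆ τ ↔ D ≤ supportedOn F τ := by
  simp only [support, Set.ofPred_subset, SetLike.le_def, mem_supportedOn]
  exact ⟨fun h x hx j hj => by_contra fun hxj => hj (h j ⟨x, hx, hxj⟩),
    fun h j ⟨x, hx, hxj⟩ => by_contra fun hj => hxj (h hx j hj)⟩

theorem support_mono {D D' : Submodule F (ι → F)} (h : D ≤ D') : support D ⊆ support D' :=
  fun _ ⟨x, hx, hxj⟩ => ⟨x, h hx, hxj⟩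

theorem finrank_supportedOn [Fintype ι] (τ : Set ι) : finrank F (supportedOn F τ) = τ.ncard := by
  classical
  rw [supportedOn, (LinearMap.iInfKerProjEquiv F (fun _ => F) disjoint_compl_right
    (Set.union_compl_self τ).ge).finrank_eq, finrank_fintype_fun_eq_card,
    ← Nat.card_eq_fintype_card, Nat.card_coe_set_eq]

theorem map_linearCombination_supportedOn [Fintype ι] {M : Type*} [AddCommGroup M] [Module F M]
    (H : ι → M) (τ : Set ι) :
    (supportedOn F τ).map (Fintype.linearCombination F H) = span F (H '' τ) := by
  classical
  apply le_antisymm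
  · rintro _ ⟨x, hx, rfl⟩
    rw [Fintype.linearCombination_apply]
    refine sum_mem fun j _ => ?_
    by_cases hj : j ∈ τ
    · exact smul_mem _ _ (subset_span ⟨j, hj, rfl⟩)
    · simp [mem_supportedOn.1 hx j hj]
  · refine span_le.2 ?_
    rintro _ ⟨j, hj, rfl⟩
    refine ⟨Pi.single j 1, mem_supportedOn.2 fun k hk => ?_, by simp⟩
    exact Pi.single_eq_of_ne (ne_of_mem_of_not_mem hj hk).symm 1

theorem finrank_shortening_add_finrank_span [Fintype ι] {M : Type*} [AddCommGroup M] [Module F M]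
    (H : ι → M) (τ : Set ι) :
    finrank F (shortening (LinearMap.ker (Fintype.linearCombination F H)) τ) +
      finrank F (span F (H '' τ)) = τ.ncard := by
  rw [← map_linearCombination_supportedOn, ← finrank_supportedOn (F := F), shortening, inf_comm, add_comm]
  exact finrank_map_add_finrank_inf_ker _ _

theorem supportedOn_mono {τ ρ : Set ι} (h : τ ⊆ ρ) : supportedOn F τ ≤ supportedOn F ρ :=
  fun _ hx => mem_supportedOn.2 fun j hj => mem_supportedOn.1 hx j fun hjτ => hj (h hjτ)

theorem shortening_mono (C : Submodule F (ι → F)) {τ ρ : Set ι} (h : τ ⊆ ρ) :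
    shortening C τ ≤ shortening C ρ :=
  inf_le_inf_left C (supportedOn_mono h)

theorem le_shortening_iff {C D : Submodule F (ι → F)} {τ : Set ι} :
    D ≤ shortening C τ ↔ D ≤ C ∧ support D ⊆ τ := by
  rw [shortening, le_inf_iff, support_subset_iff]

theorem support_shortening_subset (C : Submodule F (ι → F)) (τ : Set ι) :
    support (shortening C τ) ⊆ τ :=
  support_subset_iff.2 inf_le_right

theorem le_shortening_support {C D : Submodule F (ι → F)} (hD : D ≤ C) :
    D ≤ shortening C (support D) :=
  le_shortening_iff.2 ⟨hD, subset_rfl⟩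

theorem exists_finrank_eq_support_ssubset (W : Submodule F (ι → F)) [FiniteDimensional F W]
    {i : ℕ} (hi : i < finrank F W) : ∃ D ≤ W, finrank F D = i ∧ support D ⊂ support W := by
  obtain ⟨x, hxW, hx0⟩ := (Submodule.ne_bot_iff W).1 (by rintro rfl; simp at hi)
  obtain ⟨j, hj⟩ := Function.ne_iff.1 hx0
  have hrank := finrank_map_add_finrank_inf_ker (LinearMap.proj j) W
  have hmap : finrank F (W.map (LinearMap.proj j)) ≤ 1 := (finrank_le _).trans (finrank_self F).le
  obtain ⟨D, hD, hDi⟩ := exists_le_finrank_eq (W ⊓ LinearMap.ker (LinearMap.proj j)) (k := i) (by omega)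
  refine ⟨D, hD.trans inf_le_left, hDi,
    (Set.ssubset_iff_of_subset (support_mono (hD.trans inf_le_left))).2 ⟨j, ⟨x, hxW, hj⟩, ?_⟩⟩
  rintro ⟨y, hy, hyj⟩
  exact hyj (hD hy).2

theorem minimal_finrank_shortening_iff [Finite ι] (C : Submodule F (ι → F)) (i : ℕ) (σ : Set ι) :
    (finrank F (shortening C σ) = i ∧
      ∀ τ ⊆ σ, finrank F (shortening C τ) = i → τ = σ) ↔
    ∃ D ≤ C, finrank F D = i ∧
      (∀ D' ≤ C, finrank F D' = i → support D' ⊆ support D → support D' = support D) ∧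
      support D = σ := by
  constructor
  · rintro ⟨hσ, hmin⟩
    have key : ∀ D' ≤ C, finrank F D' = i → support D' ⊆ σ → support D' = σ :=
      fun D' hD' hD'i hsub => hmin _ hsub <| le_antisymm
        (hσ ▸ finrank_mono (shortening_mono C hsub))
        (hD'i ▸ finrank_mono (le_shortening_support hD'))
    have hsupp : support (shortening C σ) = σ :=
      key _ inf_le_left hσ (support_shortening_subset C σ)
    exact ⟨shortening C σ, inf_le_left, hσ,
      fun D' hD' hD'i hsub => (key D' hD' hD'i (hsupp ▸ hsub)).trans hsupp.symm, hsupp⟩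
  · rintro ⟨D, hDC, hDi, hDmin, rfl⟩
    have hDle : D ≤ shortening C (support D) := le_shortening_support hDC
    have hfin : finrank F (shortening C (support D)) = i := by
      refine le_antisymm (not_lt.1 fun hlt => ?_) (hDi ▸ finrank_mono hDle)
      obtain ⟨D', hD', hD'i, hss⟩ := exists_finrank_eq_support_ssubset _ hlt
      have hssD := hss.trans_subset (support_shortening_subset C _)
      exact hssD.ne (hDmin D' (hD'.trans inf_le_left) hD'i hssD.subset)
    refine ⟨hfin, fun τ hτ hτi => hτ.antisymm ?_⟩
    have hτeq : shortening C τ = shortening C (support D) :=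
      eq_of_le_of_finrank_eq (shortening_mono C hτ) (hτi.trans hfin.symm)
    exact (le_shortening_iff.1 (hτeq ▸ hDle)).2

end LinearCode

theorem stmt_4_general {F : Type*} [Field F] {n m : ℕ}
    (H : Fin n → (Fin m → F)) (i : ℕ)
    (C : Submodule F (Fin n → F))
    (hC : (C : Set (Fin n → F)) = {x : Fin n → F | ∑ j, x j • H j = 0})
    (η : Set (Fin n) → ℕ)
    (hη : ∀ τ : Set (Fin n), η τ = τ.ncard -
      Module.finrank F (Submodule.span F (H '' τ)))
    (supp : Submodule F (Fin n → F) → Set (Fin n))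
    (hsupp : ∀ D, supp D = {j : Fin n | ∃ x ∈ D, x j ≠ 0})
    (σ : Set (Fin n)) :
    (η σ = i ∧ ∀ τ : Set (Fin n), τ ⊆ σ → η τ = i → τ = σ) ↔
    (∃ D : Submodule F (Fin n → F), D ≤ C ∧ Module.finrank F D = i ∧
      (∀ D' : Submodule F (Fin n → F), D' ≤ C → Module.finrank F D' = i →
        supp D' ⊆ supp D → supp D' = supp D) ∧
      supp D = σ) := by
  have hCker : C = LinearMap.ker (Fintype.linearCombination F H) :=
    SetLike.coe_injective (hC.trans (by ext x; simp [Fintype.linearCombination_apply]))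
  have hηC : η = fun τ => finrank F (LinearCode.shortening C τ) := by
    funext τ
    have hdim := LinearCode.finrank_shortening_add_finrank_span (F := F) H τ
    rw [← hCker] at hdim
    rw [hη]
    omega
  obtain rfl : supp = LinearCode.support := funext hsupp
  subst hηC
  exact LinearCode.minimal_finrank_shortening_iff C i σ

/-- For `0 ≤ i ≤ dim C` and `σ ⊆ {1,…,n}`: `σ` is a minimal element of
`{τ : η(τ) = i}` (where `η(τ) = |τ| - rank of the columns of H indexed by τ`) if and only if
`σ` is the support of some `i`-dimensional subcode of `C = {x | ∑ j, x j • H j = 0}` whose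
support is minimal among supports of `i`-dimensional subcodes. -/
theorem stmt_4 {F : Type*} [Field F] [Fintype F] {n m : ℕ}
    (H : Fin n → (Fin m → F)) (i : ℕ)
    (C : Submodule F (Fin n → F))
    (hC : (C : Set (Fin n → F)) = {x : Fin n → F | ∑ j, x j • H j = 0})
    (hi : i ≤ Module.finrank F C)
    (η : Set (Fin n) → ℕ)
    (hη : ∀ τ : Set (Fin n), η τ = τ.ncard -
      Module.finrank F (Submodule.span F (H '' τ)))
    (supp : Submodule F (Fin n → F) → Set (Fin n))
    (hsupp : ∀ D, supp D = {j : Fin n | ∃ x ∈ D, x j ≠ 0})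
    (σ : Set (Fin n)) :
    (η σ = i ∧ ∀ τ : Set (Fin n), τ ⊆ σ → η τ = i → τ = σ) ↔
    (∃ D : Submodule F (Fin n → F), D ≤ C ∧ Module.finrank F D = i ∧
      (∀ D' : Submodule F (Fin n → F), D' ≤ C → Module.finrank F D' = i →
        supp D' ⊆ supp D → supp D' = supp D) ∧
      supp D = σ) :=
  stmt_4_general H i C hC η hη supp hsupp σ
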